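/- arXiv:math/0407400 — 4 statements merged into one kernel-verified Lean document; each statement's English description precedes it below -/
import Mathlib

section
/- In VB_n, for 1 ≤ i < j ≤ n and any index k with 1 ≤ k ≤ n−1 satisfying k < i−1, or i < k < j−1, or k > j, the following conjugating rules hold: ρ_k λ_{ij} ρ_k = λ_{ij} and ρ_k λ_{ji} ρ_k = λ_{ji}. -/
/-- Generators of the virtual braid group `VB n`:
`Sum.inl i` is the braid generator σ_{i+1} and `Sum.inr i` is the virtual
generator ρ_{i+1} (0-based index `i : Fin (n-1)`, paper indices are 1-based). -/
abbrev VBGen (n : ℕ) := Fin (n - 1) ⊕ Fin (n - 1)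

/-- σ-letter in the free group. -/
def fS {n : ℕ} (i : Fin (n - 1)) : FreeGroup (VBGen n) := FreeGroup.of (Sum.inl i)

/-- ρ-letter in the free group. -/
def fR {n : ℕ} (i : Fin (n - 1)) : FreeGroup (VBGen n) := FreeGroup.of (Sum.inr i)

/-- The defining relators of the virtual braid group `VB_n`. -/
def vbRels (n : ℕ) : Set (FreeGroup (VBGen n)) :=
  {r | (∃ i j : Fin (n - 1), (i : ℕ) + 1 = (j : ℕ) ∧
          r = fS i * fS j * fS i * (fS j * fS i * fS j)⁻¹) ∨
       (∃ i j : Fin (n - 1), (i : ℕ) + 2 ≤ (j : ℕ) ∧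
          r = fS i * fS j * (fS j * fS i)⁻¹) ∨
       (∃ i j : Fin (n - 1), (i : ℕ) + 1 = (j : ℕ) ∧
          r = fR i * fR j * fR i * (fR j * fR i * fR j)⁻¹) ∨
       (∃ i j : Fin (n - 1), (i : ℕ) + 2 ≤ (j : ℕ) ∧
          r = fR i * fR j * (fR j * fR i)⁻¹) ∨
       (∃ i : Fin (n - 1), r = fR i * fR i) ∨
       (∃ i j : Fin (n - 1), ((i : ℕ) + 2 ≤ (j : ℕ) ∨ (j : ℕ) + 2 ≤ (i : ℕ)) ∧
          r = fS i * fR j * (fR j * fS i)⁻¹) ∨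
       (∃ i j : Fin (n - 1), (i : ℕ) + 1 = (j : ℕ) ∧
          r = fR i * fR j * fS i * (fS j * fR i * fR j)⁻¹)}

/-- The virtual braid group `VB_n` as a presented group. -/
abbrev VB (n : ℕ) := PresentedGroup (vbRels n)

/-- The generator σ_i of `VB n`, with the paper's 1-based index `1 ≤ i ≤ n-1`
(junk value `1` outside that range). -/
def sig {n : ℕ} (i : ℕ) : VB n :=
  if h : 1 ≤ i ∧ i ≤ n - 1 then PresentedGroup.of (Sum.inl ⟨i - 1, by omega⟩) else 1

/-- The generator ρ_i of `VB n`, with the paper's 1-based index. -/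
def rho {n : ℕ} (i : ℕ) : VB n :=
  if h : 1 ≤ i ∧ i ≤ n - 1 then PresentedGroup.of (Sum.inr ⟨i - 1, by omega⟩) else 1

/-- The ascending product ρ_a ρ_{a+1} ⋯ ρ_b (equal to `1` if `a > b`). -/
def asc {n : ℕ} (a b : ℕ) : VB n := ((List.range' a (b + 1 - a)).map (rho (n := n))).prod

/-- The descending product ρ_b ρ_{b-1} ⋯ ρ_a (equal to `1` if `a > b`). -/
def desc {n : ℕ} (a b : ℕ) : VB n :=
  (((List.range' a (b + 1 - a)).map (rho (n := n))).reverse).prod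

/-- λ_{k l} for 1-based indices `k ≠ l`:
for `k < l`, λ_{k l} = ρ_{l-1} ⋯ ρ_{k+1} (ρ_k σ_k⁻¹) ρ_{k+1} ⋯ ρ_{l-1};
for `l < k`, λ_{k l} = ρ_{k-1} ⋯ ρ_{l+1} (σ_l⁻¹ ρ_l) ρ_{l+1} ⋯ ρ_{k-1}. -/
def lam {n : ℕ} (k l : ℕ) : VB n :=
  if k < l then desc (k + 1) (l - 1) * (rho k * (sig k)⁻¹) * asc (k + 1) (l - 1)
  else desc (l + 1) (k - 1) * ((sig l)⁻¹ * rho l) * asc (l + 1) (k - 1)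

/-- `ν : VB_n → S_n` is characterized by sending both σ_i and ρ_i to the
transposition (i, i+1). -/
def IsNu {n : ℕ} (ν : VB n →* Equiv.Perm (Fin n)) : Prop :=
  ∀ i : Fin (n - 1),
    ν (PresentedGroup.of (Sum.inl i)) =
      Equiv.swap ⟨(i : ℕ), by have := i.isLt; omega⟩ ⟨(i : ℕ) + 1, by have := i.isLt; omega⟩ ∧
    ν (PresentedGroup.of (Sum.inr i)) =
      Equiv.swap ⟨(i : ℕ), by have := i.isLt; omega⟩ ⟨(i : ℕ) + 1, by have := i.isLt; omega⟩

/-- The subgroup of `VB n` generated by the ρ-generators (a copy of `S_n`). -/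
def Rsub (n : ℕ) : Subgroup (VB n) :=
  Subgroup.closure (Set.range fun i : Fin (n - 1) => (PresentedGroup.of (Sum.inr i) : VB n))

/-- The subgroup of `VB n` generated by the λ_{k l} with `1 ≤ k ≠ l ≤ m`;
for `m = n` this is the virtual pure braid group `VP_n`, and in general it is
the canonical copy of `VP_m` inside `VP_n`. -/
def VPsub (n : ℕ) (m : ℕ) : Subgroup (VB n) :=
  Subgroup.closure {x | ∃ k l : ℕ, 1 ≤ k ∧ k ≤ m ∧ 1 ≤ l ∧ l ≤ m ∧ k ≠ l ∧ x = lam k l}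

/-- `V_i^*`: the normal closure, inside the copy of `VP_{i+1}`, of the subgroup
`V_i = ⟨λ_{k,i+1}, λ_{i+1,k} : 1 ≤ k ≤ i⟩`. -/
def Vstar (n : ℕ) (i : ℕ) : Subgroup (VB n) :=
  Subgroup.closure {x | ∃ g ∈ VPsub n (i + 1), ∃ k : ℕ, 1 ≤ k ∧ k ≤ i ∧
    (x = g⁻¹ * lam k (i + 1) * g ∨ x = g⁻¹ * lam (i + 1) k * g)}

/-! `λ_{ij}` and `λ_{ji}` are the conjugates `A⁻¹ x A` of `x = ρ_i σ_i⁻¹`, resp. `σ_i⁻¹ ρ_i`, by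
`A = ρ_{i+1} ⋯ ρ_{j-1}`, since the descending product of involutions is the inverse of the
ascending one. For `k` away from `[i, j]` the generator `ρ_k` commutes with `A` and with `x`.
For `i < k < j - 1` the braid relations give `A ρ_k = ρ_{k+1} A`, and `ρ_{k+1}` commutes with `x`.
In both cases `A ρ_k = ρ_m A` with `ρ_m` commuting with `x`, and then conjugating `A⁻¹ x A`
by the involution `ρ_k` gives `A⁻¹ ρ_m⁻¹ x ρ_m A = A⁻¹ x A`. -/

lemma conj_conj_eq_of_mul_eq {G : Type*} [Group G] {r r' c x : G} (hr : r⁻¹ = r)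
    (hc : c * r = r' * c) (hx : Commute r' x) : r * (c⁻¹ * x * c) * r = c⁻¹ * x * c :=
  calc r * (c⁻¹ * x * c) * r = (c * r)⁻¹ * x * (c * r) := by rw [mul_inv_rev, hr]; group
    _ = c⁻¹ * (r'⁻¹ * x * r') * c := by rw [hc]; group
    _ = c⁻¹ * x * c := by rw [hx.inv_mul_cancel]

section VirtualBraid

variable {n : ℕ}

lemma rho_of_mem {k : ℕ} (hk : 1 ≤ k ∧ k ≤ n - 1) :
    (rho k : VB n) = PresentedGroup.mk _ (fR ⟨k - 1, by omega⟩) := by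
  rw [rho, dif_pos hk]; rfl

lemma sig_of_mem {k : ℕ} (hk : 1 ≤ k ∧ k ≤ n - 1) :
    (sig k : VB n) = PresentedGroup.mk _ (fS ⟨k - 1, by omega⟩) := by
  rw [sig, dif_pos hk]; rfl

lemma rho_of_not_mem {k : ℕ} (hk : ¬(1 ≤ k ∧ k ≤ n - 1)) : (rho k : VB n) = 1 := dif_neg hk

lemma sig_of_not_mem {k : ℕ} (hk : ¬(1 ≤ k ∧ k ≤ n - 1)) : (sig k : VB n) = 1 := dif_neg hk

lemma rho_mul_self (k : ℕ) : (rho k : VB n) * rho k = 1 := by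
  by_cases hk : 1 ≤ k ∧ k ≤ n - 1
  · rw [rho_of_mem hk, ← map_mul]
    exact PresentedGroup.one_of_mem (Or.inr <| Or.inr <| Or.inr <| Or.inr <| Or.inl ⟨_, rfl⟩)
  · rw [rho_of_not_mem hk, mul_one]

lemma rho_inv (k : ℕ) : (rho k : VB n)⁻¹ = rho k :=
  inv_eq_of_mul_eq_one_right (rho_mul_self k)

lemma rho_commute {k m : ℕ} (h : k + 2 ≤ m ∨ m + 2 ≤ k) : Commute (rho k : VB n) (rho m) := by
  wlog hkm : k + 2 ≤ m generalizing k m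
  · exact (this h.symm (h.resolve_left hkm)).symm
  by_cases hk : 1 ≤ k ∧ k ≤ n - 1
  · by_cases hm : 1 ≤ m ∧ m ≤ n - 1
    · rw [rho_of_mem hk, rho_of_mem hm]
      show _ * _ = _ * _
      rw [← map_mul, ← map_mul]
      exact PresentedGroup.mk_eq_mk_of_mul_inv_mem <| Or.inr <| Or.inr <| Or.inr <| Or.inl
        ⟨_, _, show k - 1 + 2 ≤ m - 1 by omega, rfl⟩
    · rw [rho_of_not_mem hm]; exact Commute.one_right _
  · rw [rho_of_not_mem hk]; exact Commute.one_left _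

lemma rho_commute_sig {k m : ℕ} (h : k + 2 ≤ m ∨ m + 2 ≤ k) :
    Commute (rho k : VB n) (sig m) := by
  by_cases hk : 1 ≤ k ∧ k ≤ n - 1
  · by_cases hm : 1 ≤ m ∧ m ≤ n - 1
    · rw [rho_of_mem hk, sig_of_mem hm]
      refine Commute.symm ?_
      show _ * _ = _ * _
      rw [← map_mul, ← map_mul]
      exact PresentedGroup.mk_eq_mk_of_mul_inv_mem <| Or.inr <| Or.inr <| Or.inr <| Or.inr <|
        Or.inr <| Or.inl ⟨_, _, show m - 1 + 2 ≤ k - 1 ∨ k - 1 + 2 ≤ m - 1 by omega, rfl⟩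
    · rw [sig_of_not_mem hm]; exact Commute.one_right _
  · rw [rho_of_not_mem hk]; exact Commute.one_left _

lemma rho_braid {k : ℕ} (hk : 1 ≤ k) (hkn : k + 1 ≤ n - 1) :
    (rho k : VB n) * rho (k + 1) * rho k = rho (k + 1) * rho k * rho (k + 1) := by
  rw [rho_of_mem ⟨hk, by omega⟩, rho_of_mem ⟨by omega, hkn⟩]
  simp only [← map_mul]
  exact PresentedGroup.mk_eq_mk_of_mul_inv_mem <| Or.inr <| Or.inr <| Or.inl
    ⟨_, _, show k - 1 + 1 = k + 1 - 1 by omega, rfl⟩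

lemma asc_mul_asc {a b c : ℕ} (hac : a ≤ c + 1) (hcb : c ≤ b) :
    (asc a c : VB n) * asc (c + 1) b = asc a b := by
  unfold asc
  rw [← List.prod_append, ← List.map_append, show b + 1 - a = c + 1 - a + (b + 1 - (c + 1)) by omega,
    ← List.range'_append_1, show a + (c + 1 - a) = c + 1 by omega]

lemma asc_eq_rho_mul {a b : ℕ} (hab : a ≤ b) : (asc a b : VB n) = rho a * asc (a + 1) b := by
  unfold asc
  rw [show b + 1 - a = b + 1 - (a + 1) + 1 by omega, List.range'_succ, List.map_cons,
    List.prod_cons]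

lemma desc_eq_inv_asc (a b : ℕ) : (desc a b : VB n) = (asc a b)⁻¹ := by
  simp only [desc, asc, List.prod_inv_reverse, List.map_map, Function.comp_def, rho_inv]

lemma rho_commute_asc {m a b : ℕ} (h : ∀ x, a ≤ x → x ≤ b → m + 2 ≤ x ∨ x + 2 ≤ m) :
    Commute (rho m : VB n) (asc a b) := by
  refine Commute.list_prod_right _ _ fun y hy => ?_
  obtain ⟨x, hx, rfl⟩ := List.mem_map.mp hy
  rw [List.mem_range'_1] at hx
  exact rho_commute (h x hx.1 (by omega))

lemma asc_mul_rho {a b k : ℕ} (ha : 1 ≤ a) (hak : a ≤ k) (hkb : k < b) (hb : b ≤ n - 1) :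
    (asc a b : VB n) * rho k = rho (k + 1) * asc a b := by
  set P : VB n := asc a (k - 1)
  set Q : VB n := asc (k + 2) b
  have hA : (asc a b : VB n) = P * (rho k * (rho (k + 1) * Q)) := by
    rw [← asc_eq_rho_mul (by omega), ← asc_eq_rho_mul (by omega), ← asc_mul_asc (c := k - 1)
      (by omega) (by omega), Nat.sub_add_cancel (by omega)]
  have hP : Commute (rho (k + 1) : VB n) P := rho_commute_asc fun x _ _ => Or.inr (by omega)
  have hQ : Commute (rho k : VB n) Q := rho_commute_asc fun x _ _ => Or.inl (by omega)
  rw [hA]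
  calc P * (rho k * (rho (k + 1) * Q)) * rho k
      = P * (rho k * rho (k + 1) * rho k) * Q := by simp only [mul_assoc]; rw [← hQ.eq]
    _ = rho (k + 1) * (P * (rho k * (rho (k + 1) * Q))) := by
        rw [rho_braid (by omega) (by omega)]
        simp only [mul_assoc]
        rw [← mul_assoc P, ← hP.eq, mul_assoc]

lemma lam_of_lt {k l : ℕ} (h : k < l) :
    (lam k l : VB n) = (asc (k + 1) (l - 1))⁻¹ * (rho k * (sig k)⁻¹) * asc (k + 1) (l - 1) := by
  rw [lam, if_pos h, desc_eq_inv_asc]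

lemma lam_of_gt {k l : ℕ} (h : l < k) :
    (lam k l : VB n) = (asc (l + 1) (k - 1))⁻¹ * ((sig l)⁻¹ * rho l) * asc (l + 1) (k - 1) := by
  rw [lam, if_neg (by omega), desc_eq_inv_asc]

lemma exists_asc_mul_rho_eq {i j k : ℕ} (hij : i < j) (hj : j ≤ n)
    (hcase : k + 1 < i ∨ (i < k ∧ k + 1 < j) ∨ j < k) :
    ∃ m, (m + 2 ≤ i ∨ i + 2 ≤ m) ∧
      (asc (i + 1) (j - 1) : VB n) * rho k = rho m * asc (i + 1) (j - 1) := by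
  rcases hcase with hk | ⟨hik, hkj⟩ | hk
  · exact ⟨k, Or.inl (by omega), (rho_commute_asc fun x _ _ => Or.inl (by omega)).eq.symm⟩
  · exact ⟨k + 1, Or.inr (by omega), asc_mul_rho (by omega) (by omega) (by omega) (by omega)⟩
  · exact ⟨k, Or.inr (by omega), (rho_commute_asc fun x _ _ => Or.inr (by omega)).eq.symm⟩

end VirtualBraid

theorem stmt_2_general (n : ℕ) (i j k : ℕ) (hij : i < j) (hj : j ≤ n)
    (hcase : k + 1 < i ∨ (i < k ∧ k + 1 < j) ∨ j < k) :
    (rho k * lam i j * rho k : VB n) = lam i j ∧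
    (rho k * lam j i * rho k : VB n) = lam j i := by
  obtain ⟨m, hm, hshift⟩ := exists_asc_mul_rho_eq (n := n) hij hj hcase
  have hρ : Commute (rho m : VB n) (rho i) := rho_commute hm
  have hσ : Commute (rho m : VB n) (sig i)⁻¹ := (rho_commute_sig hm).inv_right
  rw [lam_of_lt hij, lam_of_gt hij]
  exact ⟨conj_conj_eq_of_mul_eq (rho_inv k) hshift (hρ.mul_right hσ),
    conj_conj_eq_of_mul_eq (rho_inv k) hshift (hσ.mul_right hρ)⟩

/-- for 1 ≤ i < j ≤ n and 1 ≤ k ≤ n-1 with k < i-1, or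
i < k < j-1, or k > j, one has ρ_k λ_{ij} ρ_k = λ_{ij} and ρ_k λ_{ji} ρ_k = λ_{ji}. -/
theorem stmt_2 (n : ℕ) (hn : 2 ≤ n) (i j k : ℕ) (hi : 1 ≤ i) (hij : i < j) (hj : j ≤ n)
    (hk1 : 1 ≤ k) (hk2 : k ≤ n - 1)
    (hcase : k + 1 < i ∨ (i < k ∧ k + 1 < j) ∨ j < k) :
    (rho k * lam i j * rho k : VB n) = lam i j ∧
    (rho k * lam j i * rho k : VB n) = lam j i :=
  stmt_2_general n i j k hij hj hcase
end

section
/- In VB_n, for 1 ≤ i ≤ n−1 one has ρ_i λ_{i,i+1} ρ_i = λ_{i+1,i} and ρ_i λ_{i+1,i} ρ_i = λ_{i,i+1}; moreover, for 1 ≤ i < j−1 ≤ n−1 one has ρ_i λ_{ij} ρ_i = λ_{i+1,j} and ρ_i λ_{ji} ρ_i = λ_{j,i+1}. -/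
/-! Conjugation by `τ = ρ_i ρ_{i+1}` shifts `ρ_i ↦ ρ_{i+1}` (braid relation) and `σ_i ↦ σ_{i+1}`
(mixed relation), hence `λ_{i,i+1} ↦ λ_{i+1,i+2}` and `λ_{i+1,i} ↦ λ_{i+2,i+1}`. For `j > i + 1`,
`ρ_i` commutes with the outer factors `ρ_{j-1} ⋯ ρ_{i+2}` and `ρ_{i+2} ⋯ ρ_{j-1}` of `λ_{ij}`, and
conjugating the remaining core `ρ_{i+1} λ_{i,i+1} ρ_{i+1}` by `ρ_i` is conjugation by `τ`. -/

theorem Commute.mul_mul_mul_mul_self {M : Type*} [Monoid M] {r d a : M} (hd : Commute r d)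
    (ha : Commute r a) (x : M) : r * (d * x * a) * r = d * (r * x * r) * a := by
  simp only [← mul_assoc, hd.eq]
  simp only [mul_assoc, ha.eq]

namespace VB

variable {n : ℕ}

theorem rho_of {i : ℕ} (h : 1 ≤ i ∧ i ≤ n - 1) :
    (rho i : VB n) = PresentedGroup.of (Sum.inr ⟨i - 1, by omega⟩) :=
  dif_pos h

theorem sig_of {i : ℕ} (h : 1 ≤ i ∧ i ≤ n - 1) :
    (sig i : VB n) = PresentedGroup.of (Sum.inl ⟨i - 1, by omega⟩) :=
  dif_pos h

theorem rho_mul_self (i : ℕ) : (rho i : VB n) * rho i = 1 := by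
  by_cases h : 1 ≤ i ∧ i ≤ n - 1
  · rw [rho_of h]
    exact PresentedGroup.one_of_mem (Or.inr <| Or.inr <| Or.inr <| Or.inr <| Or.inl ⟨_, rfl⟩)
  · rw [show (rho i : VB n) = 1 from dif_neg h, one_mul]

theorem rho_inv (i : ℕ) : (rho i : VB n)⁻¹ = rho i :=
  inv_eq_of_mul_eq_one_right (rho_mul_self i)

theorem commute_rho_rho {i j : ℕ} (h : i + 2 ≤ j) : Commute (rho i : VB n) (rho j) := by
  by_cases hi : 1 ≤ i ∧ i ≤ n - 1
  · by_cases hj : 1 ≤ j ∧ j ≤ n - 1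
    · rw [rho_of hi, rho_of hj]
      refine PresentedGroup.mk_eq_mk_of_mul_inv_mem
        (Or.inr <| Or.inr <| Or.inr <| Or.inl ⟨_, _, ?_, rfl⟩)
      simp only
      omega
    · rw [show (rho j : VB n) = 1 from dif_neg hj]
      exact Commute.one_right _
  · rw [show (rho i : VB n) = 1 from dif_neg hi]
    exact Commute.one_left _

theorem rho_mul_rho_mul_rho {i : ℕ} (h1 : 1 ≤ i) (h2 : i + 1 ≤ n - 1) :
    (rho i : VB n) * rho (i + 1) * rho i = rho (i + 1) * rho i * rho (i + 1) := by
  rw [rho_of ⟨h1, by omega⟩, rho_of ⟨by omega, h2⟩]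
  refine PresentedGroup.mk_eq_mk_of_mul_inv_mem (Or.inr <| Or.inr <| Or.inl ⟨_, _, ?_, rfl⟩)
  simp only
  omega

theorem rho_mul_rho_mul_sig {i : ℕ} (h1 : 1 ≤ i) (h2 : i + 1 ≤ n - 1) :
    (rho i : VB n) * rho (i + 1) * sig i = sig (i + 1) * (rho i * rho (i + 1)) := by
  rw [rho_of ⟨h1, by omega⟩, rho_of ⟨by omega, h2⟩, sig_of ⟨h1, by omega⟩,
    sig_of ⟨by omega, h2⟩, ← mul_assoc]
  refine PresentedGroup.mk_eq_mk_of_mul_inv_mem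
    (Or.inr <| Or.inr <| Or.inr <| Or.inr <| Or.inr <| Or.inr ⟨_, _, ?_, rfl⟩)
  simp only
  omega

theorem conj_rho_mul_rho_rho {i : ℕ} (h1 : 1 ≤ i) (h2 : i + 1 ≤ n - 1) :
    MulAut.conj ((rho i : VB n) * rho (i + 1)) (rho i) = rho (i + 1) := by
  rw [MulAut.conj_apply, mul_inv_rev, rho_inv, rho_inv]
  calc (rho i : VB n) * rho (i + 1) * rho i * (rho (i + 1) * rho i)
      = rho (i + 1) * rho i * (rho (i + 1) * rho (i + 1)) * rho i := by
        rw [rho_mul_rho_mul_rho h1 h2]; group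
    _ = rho (i + 1) := by rw [rho_mul_self, mul_one, mul_assoc, rho_mul_self, mul_one]

theorem conj_rho_mul_rho_sig {i : ℕ} (h1 : 1 ≤ i) (h2 : i + 1 ≤ n - 1) :
    MulAut.conj ((rho i : VB n) * rho (i + 1)) (sig i) = sig (i + 1) := by
  rw [MulAut.conj_apply, mul_inv_eq_iff_eq_mul]
  exact rho_mul_rho_mul_sig h1 h2

theorem lam_self_succ (i : ℕ) : (lam i (i + 1) : VB n) = rho i * (sig i)⁻¹ := by
  simp [lam, asc, desc]

theorem lam_succ_self (i : ℕ) : (lam (i + 1) i : VB n) = (sig i)⁻¹ * rho i := by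
  simp [lam, asc, desc]

theorem conj_lam_self_succ {i : ℕ} (h1 : 1 ≤ i) (h2 : i + 1 ≤ n - 1) :
    MulAut.conj ((rho i : VB n) * rho (i + 1)) (lam i (i + 1)) = lam (i + 1) (i + 2) := by
  rw [lam_self_succ, lam_self_succ, map_mul, map_inv, conj_rho_mul_rho_rho h1 h2,
    conj_rho_mul_rho_sig h1 h2]

theorem conj_lam_succ_self {i : ℕ} (h1 : 1 ≤ i) (h2 : i + 1 ≤ n - 1) :
    MulAut.conj ((rho i : VB n) * rho (i + 1)) (lam (i + 1) i) = lam (i + 2) (i + 1) := by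
  rw [lam_succ_self, lam_succ_self, map_mul, map_inv, conj_rho_mul_rho_rho h1 h2,
    conj_rho_mul_rho_sig h1 h2]

theorem rho_mul_lam_self_succ_mul_rho (i : ℕ) :
    (rho i * lam i (i + 1) * rho i : VB n) = lam (i + 1) i := by
  rw [lam_self_succ, lam_succ_self, ← mul_assoc, rho_mul_self, one_mul]

theorem rho_mul_lam_succ_self_mul_rho (i : ℕ) :
    (rho i * lam (i + 1) i * rho i : VB n) = lam i (i + 1) := by
  rw [lam_self_succ, lam_succ_self, mul_assoc, mul_assoc, rho_mul_self, mul_one]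

theorem asc_eq_rho_mul_asc {a b : ℕ} (h : a ≤ b) : (asc a b : VB n) = rho a * asc (a + 1) b := by
  rw [asc, asc, show b + 1 - a = b + 1 - (a + 1) + 1 by omega, List.range'_succ]
  simp

theorem desc_eq_desc_mul_rho {a b : ℕ} (h : a ≤ b) :
    (desc a b : VB n) = desc (a + 1) b * rho a := by
  rw [desc, desc, show b + 1 - a = b + 1 - (a + 1) + 1 by omega, List.range'_succ]
  simp

theorem commute_rho_asc {i a : ℕ} (b : ℕ) (h : i + 2 ≤ a) : Commute (rho i : VB n) (asc a b) :=
  Commute.list_prod_right _ _ fun _ hx => by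
    obtain ⟨k, hk, rfl⟩ := List.mem_map.mp hx
    exact commute_rho_rho (h.trans (List.mem_range'_1.mp hk).1)

theorem commute_rho_desc {i a : ℕ} (b : ℕ) (h : i + 2 ≤ a) : Commute (rho i : VB n) (desc a b) :=
  Commute.list_prod_right _ _ fun _ hx => by
    obtain ⟨k, hk, rfl⟩ := List.mem_map.mp (List.mem_reverse.mp hx)
    exact commute_rho_rho (h.trans (List.mem_range'_1.mp hk).1)

theorem lam_eq_of_lt {k l : ℕ} (h : k < l) :
    (lam k l : VB n) = desc (k + 1) (l - 1) * lam k (k + 1) * asc (k + 1) (l - 1) := by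
  rw [lam_self_succ, lam, if_pos h]

theorem lam_eq_of_gt {k l : ℕ} (h : l < k) :
    (lam k l : VB n) = desc (l + 1) (k - 1) * lam (l + 1) l * asc (l + 1) (k - 1) := by
  rw [lam_succ_self, lam, if_neg (by omega)]

theorem rho_mul_desc_mul_asc_mul_rho {i j : ℕ} (hij : i + 1 < j) (x : VB n) :
    rho i * (desc (i + 1) (j - 1) * x * asc (i + 1) (j - 1)) * rho i =
      desc (i + 2) (j - 1) * MulAut.conj (rho i * rho (i + 1)) x * asc (i + 2) (j - 1) := by
  have hD := commute_rho_desc (n := n) (i := i) (j - 1) le_rfl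
  have hA := commute_rho_asc (n := n) (i := i) (j - 1) le_rfl
  rw [desc_eq_desc_mul_rho (by omega), asc_eq_rho_mul_asc (by omega),
    show desc (i + 1 + 1) (j - 1) * rho (i + 1) * x * (rho (i + 1) * asc (i + 1 + 1) (j - 1)) =
      desc (i + 2) (j - 1) * (rho (i + 1) * x * rho (i + 1)) * asc (i + 2) (j - 1) by group,
    hD.mul_mul_mul_mul_self hA, MulAut.conj_apply, mul_inv_rev, rho_inv, rho_inv]
  group

end VB

open VB in
theorem stmt_4_general (n : ℕ) :
    (∀ i : ℕ, 1 ≤ i → i ≤ n - 1 →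
      (rho i * lam i (i + 1) * rho i : VB n) = lam (i + 1) i ∧
      (rho i * lam (i + 1) i * rho i : VB n) = lam i (i + 1)) ∧
    (∀ i j : ℕ, 1 ≤ i → i + 1 < j → j ≤ n →
      (rho i * lam i j * rho i : VB n) = lam (i + 1) j ∧
      (rho i * lam j i * rho i : VB n) = lam j (i + 1)) := by
  refine ⟨fun i _ _ => ⟨rho_mul_lam_self_succ_mul_rho i, rho_mul_lam_succ_self_mul_rho i⟩, ?_⟩
  intro i j h1 hij hj
  have h2 : i + 1 ≤ n - 1 := by omega
  constructor
  · rw [lam_eq_of_lt (by omega : i < j), lam_eq_of_lt hij,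
      rho_mul_desc_mul_asc_mul_rho hij, conj_lam_self_succ h1 h2]
  · rw [lam_eq_of_gt (by omega : i < j), lam_eq_of_gt hij,
      rho_mul_desc_mul_asc_mul_rho hij, conj_lam_succ_self h1 h2]

/-- in VB_n, ρ_i λ_{i,i+1} ρ_i = λ_{i+1,i} and
ρ_i λ_{i+1,i} ρ_i = λ_{i,i+1} for 1 ≤ i ≤ n-1, and for i+1 < j ≤ n,
ρ_i λ_{ij} ρ_i = λ_{i+1,j} and ρ_i λ_{ji} ρ_i = λ_{j,i+1}. -/
theorem stmt_4 (n : ℕ) (hn : 2 ≤ n) :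
    (∀ i : ℕ, 1 ≤ i → i ≤ n - 1 →
      (rho i * lam i (i + 1) * rho i : VB n) = lam (i + 1) i ∧
      (rho i * lam (i + 1) i * rho i : VB n) = lam i (i + 1)) ∧
    (∀ i j : ℕ, 1 ≤ i → i + 1 < j → j ≤ n →
      (rho i * lam i j * rho i : VB n) = lam (i + 1) j ∧
      (rho i * lam j i * rho i : VB n) = lam j (i + 1)) :=
  stmt_4_general n
end

section
/- The virtual pure braid group VP_2 = ker(ν : VB_2 → S_2) is a free group of rank 2, freely generated by the two elements λ_{12} = ρ_1 σ_1^{−1} and λ_{21} = σ_1^{−1} ρ_1; that is, the homomorphism from the free group on two generators to VB_2 sending the generators to λ_{12} and λ_{21} is injective with image ker ν. -/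
/-!
`VB₂ = ⟨σ₁, ρ₁ | ρ₁² = 1⟩` is isomorphic to `F(x, y) ⋊ ℤˣ`, where `-1 = t` acts by swapping `x`
and `y`: the isomorphism sends `ρ₁ ↦ t` and `σ₁ ↦ x⁻¹ t`, hence `λ₁₂ ↦ x` and `λ₂₁ ↦ y`, and
it turns `ν` (followed by the sign, which is injective on `S₂`) into the projection onto `ℤˣ`.
So `VP₂ = ker ν` corresponds to the free factor `F(x, y)`.
-/

def unitsIntLift {H : Type*} [Group H] (g : H) (hg : g * g = 1) : ℤˣ →* H where
  toFun u := if u = 1 then 1 else g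
  map_one' := if_pos rfl
  map_mul' u v := by
    rcases Int.units_eq_one_or u with rfl | rfl <;> rcases Int.units_eq_one_or v with rfl | rfl <;>
      simp [hg]

@[simp]
lemma unitsIntLift_neg_one {H : Type*} [Group H] (g : H) (hg : g * g = 1) :
    unitsIntLift g hg (-1) = g := by
  simp [unitsIntLift]

def swapGens : MulAut (FreeGroup Bool) := FreeGroup.freeGroupCongr Equiv.boolNot

@[simp]
lemma swapGens_of (b : Bool) : swapGens (FreeGroup.of b) = FreeGroup.of (!b) := rfl

lemma swapGens_mul_self : swapGens * swapGens = 1 := by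
  refine MulEquiv.toMonoidHom_injective (FreeGroup.ext_hom _ _ fun b => ?_)
  simp [MulAut.mul_apply]

lemma swapGens_inv : swapGens⁻¹ = swapGens := inv_eq_of_mul_eq_one_right swapGens_mul_self

abbrev swapAction : ℤˣ →* MulAut (FreeGroup Bool) := unitsIntLift swapGens swapGens_mul_self

open SemidirectProduct

lemma vbRels_two : vbRels 2 = {fR 0 * fR 0} := by
  ext r
  simp [vbRels, Fin.fin_one_eq_zero]

namespace VB

lemma rho_one_mul_self : (rho 1 : VB 2) * rho 1 = 1 := by
  have h := PresentedGroup.one_of_mem (rels := vbRels 2) (x := fR 0 * fR 0) (by simp [vbRels_two])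
  rwa [map_mul] at h

lemma lam_one_two : (lam 1 2 : VB 2) = rho 1 * (sig 1)⁻¹ := by
  simp [lam, desc, asc]

lemma lam_two_one : (lam 2 1 : VB 2) = (sig 1)⁻¹ * rho 1 := by
  simp [lam, desc, asc]

def lamLift : FreeGroup Bool →* VB 2 :=
  FreeGroup.lift (fun b : Bool => if b then (lam 1 2 : VB 2) else lam 2 1)

lemma rho_one_conj_lamLift (b : Bool) :
    rho 1 * lamLift (FreeGroup.of b) * (rho 1)⁻¹ = lamLift (FreeGroup.of !b) := by
  have hinv : (rho 1 : VB 2)⁻¹ = rho 1 := inv_eq_of_mul_eq_one_right rho_one_mul_self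
  cases b
  · simp [lamLift, lam_one_two, lam_two_one, mul_assoc]
  · simp [lamLift, lam_one_two, lam_two_one, ← mul_assoc, rho_one_mul_self, hinv]

def toSemidirectGen : VBGen 2 → FreeGroup Bool ⋊[swapAction] ℤˣ
  | .inl _ => inl (FreeGroup.of true)⁻¹ * inr (-1)
  | .inr _ => inr (-1)

def toSemidirect : VB 2 →* FreeGroup Bool ⋊[swapAction] ℤˣ :=
  PresentedGroup.toGroup (f := toSemidirectGen) <| by
    simp [vbRels_two, fR, toSemidirectGen, ← inr.map_mul]

def ofSemidirect : FreeGroup Bool ⋊[swapAction] ℤˣ →* VB 2 :=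
  lift lamLift (unitsIntLift (rho 1) rho_one_mul_self) fun u => by
    rcases Int.units_eq_one_or u with rfl | rfl
    · ext; simp
    · ext b; simp [← rho_one_conj_lamLift]

lemma toSemidirect_sig_one : toSemidirect (sig 1) = inl (FreeGroup.of true)⁻¹ * inr (-1) :=
  PresentedGroup.toGroup.of _

lemma toSemidirect_rho_one : toSemidirect (rho 1) = inr (-1) :=
  PresentedGroup.toGroup.of _

lemma toSemidirect_comp_lamLift : toSemidirect.comp lamLift = inl := by
  refine FreeGroup.ext_hom _ _ fun b => ?_
  cases b
  · simp [lamLift, lam_two_one, toSemidirect_sig_one, toSemidirect_rho_one, mul_assoc]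
    rw [← map_inv, ← mul_assoc, ← inl_aut_inv]
    simp [swapGens_inv]
  · simp [lamLift, lam_one_two, toSemidirect_sig_one, toSemidirect_rho_one]

lemma toSemidirect_leftInverse : Function.LeftInverse ofSemidirect toSemidirect := by
  suffices ofSemidirect.comp toSemidirect = MonoidHom.id _ from DFunLike.congr_fun this
  refine PresentedGroup.ext fun x => ?_
  rcases x with i | i <;> obtain rfl := Fin.fin_one_eq_zero i
  · change ofSemidirect (toSemidirect (sig 1)) = sig 1
    simp [toSemidirect_sig_one, ofSemidirect, lamLift, lam_one_two, mul_assoc]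
  · change ofSemidirect (toSemidirect (rho 1)) = rho 1
    simp [toSemidirect_rho_one, ofSemidirect]

lemma toSemidirect_rightInverse : Function.RightInverse ofSemidirect toSemidirect := by
  suffices toSemidirect.comp ofSemidirect = MonoidHom.id _ from DFunLike.congr_fun this
  refine hom_ext ?_ ?_
  · rw [MonoidHom.comp_assoc, ofSemidirect, lift_comp_inl, toSemidirect_comp_lamLift]; rfl
  · refine MonoidHom.ext fun u => ?_
    rcases Int.units_eq_one_or u with rfl | rfl <;> simp [ofSemidirect, toSemidirect_rho_one]

lemma rightHom_comp_toSemidirect {ν : VB 2 →* Equiv.Perm (Fin 2)} (hν : IsNu ν) :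
    rightHom.comp toSemidirect = Equiv.Perm.sign.comp ν := by
  refine PresentedGroup.ext fun x => ?_
  rcases x with i | i <;>
    simp [toSemidirect, toSemidirectGen, (hν i).1, (hν i).2, Equiv.Perm.sign_swap']

end VB

open VB in
/-- VP_2 = ker(ν : VB_2 → S_2) is free of rank 2, freely
generated by λ_{12} = ρ_1 σ_1⁻¹ and λ_{21} = σ_1⁻¹ ρ_1: the homomorphism from
the free group on two generators sending them to λ_{12}, λ_{21} is injective
with image ker ν. -/
theorem stmt_9 (ν : VB 2 →* Equiv.Perm (Fin 2)) (hν : IsNu ν) :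
    Function.Injective
      (FreeGroup.lift (fun b : Bool => if b then (lam 1 2 : VB 2) else lam 2 1)) ∧
    (FreeGroup.lift (fun b : Bool => if b then (lam 1 2 : VB 2) else lam 2 1)).range
      = ν.ker := by
  change Function.Injective lamLift ∧ lamLift.range = ν.ker
  have hlamLift : lamLift = ofSemidirect.comp inl := (lift_comp_inl _ _ _).symm
  refine ⟨hlamLift ▸ toSemidirect_rightInverse.injective.comp inl_injective, ?_⟩
  calc lamLift.range = rightHom.ker.map ofSemidirect := by
        rw [← range_inl_eq_ker_rightHom, MonoidHom.map_range, hlamLift]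
    _ = rightHom.ker.comap toSemidirect :=
        Subgroup.map_eq_comap_of_inverse toSemidirect_rightInverse toSemidirect_leftInverse _
    _ = (Equiv.Perm.sign.comp ν).ker := by rw [MonoidHom.comap_ker, rightHom_comp_toSemidirect hν]
    _ = ν.ker := MonoidHom.ker_comp_of_injective _ _ (by decide)
end

section
/- Let F_n be the free group on x_1, …, x_n and define the automorphisms σ̂_i (x_i ↦ x_i x_{i+1} x_i^{−1}, x_{i+1} ↦ x_i, x_l ↦ x_l for l ≠ i, i+1), α_i (x_i ↦ x_{i+1}, x_{i+1} ↦ x_i, x_l ↦ x_l for l ≠ i, i+1), and ε_{ij} (x_i ↦ x_j^{−1} x_i x_j, x_l ↦ x_l for l ≠ i) of F_n. Then there is a (unique) homomorphism φ : VB_n → Aut(F_n) with φ(σ_i) = σ̂_i and φ(ρ_i) = α_i for all 1 ≤ i ≤ n−1; this φ maps VP_n onto the group Cb_n of basis-conjugating automorphisms, i.e. φ(VP_n) = ⟨ε_{ij} : 1 ≤ i ≠ j ≤ n⟩, and for each 1 ≤ i ≤ n−1 it maps V_i^* onto D_i = ⟨ε_{i+1,1}, …, ε_{i+1,i}, ε_{1,i+1},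 …, ε_{i,i+1}⟩. -/
/-- `e` is the basis-conjugating automorphism ε_{ab} of the free group:
x_a ↦ x_b⁻¹ x_a x_b and x_l ↦ x_l for l ≠ a. -/
def IsEps {n : ℕ} (e : MulAut (FreeGroup (Fin n))) (a b : Fin n) : Prop :=
  e (FreeGroup.of a) = (FreeGroup.of b)⁻¹ * FreeGroup.of a * FreeGroup.of b ∧
  ∀ l : Fin n, l ≠ a → e (FreeGroup.of l) = FreeGroup.of l

/-- Cb_n = ⟨ε_{ij} : i ≠ j⟩, the group of basis-conjugating automorphisms. -/
def CbSub (n : ℕ) : Subgroup (MulAut (FreeGroup (Fin n))) :=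
  Subgroup.closure {e | ∃ a b : Fin n, a ≠ b ∧ IsEps e a b}

/-- D_i = ⟨ε_{i+1,k}, ε_{k,i+1} : 1 ≤ k ≤ i⟩ (paper's 1-based indices; the
1-based index m corresponds to `⟨m-1, _⟩ : Fin n`). -/
def Dsub (n : ℕ) (i : ℕ) : Subgroup (MulAut (FreeGroup (Fin n))) :=
  Subgroup.closure {e | ∃ k : ℕ, 1 ≤ k ∧ k ≤ i ∧ ∃ (hi : i < n) (hk : k - 1 < n),
    (IsEps e ⟨i, hi⟩ ⟨k - 1, hk⟩ ∨ IsEps e ⟨k - 1, hk⟩ ⟨i, hi⟩)}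

/-- `φ : VB_n → Aut(F_n)` sends each σ_i to the Artin automorphism σ̂_i
(x_i ↦ x_i x_{i+1} x_i⁻¹, x_{i+1} ↦ x_i, x_l ↦ x_l otherwise) and each ρ_i to
the permutation automorphism α_i (x_i ↔ x_{i+1}); here `i : Fin (n-1)` is the
0-based version of the paper's index. -/
def IsPhiVW {n : ℕ} (φ : VB n →* MulAut (FreeGroup (Fin n))) : Prop :=
  ∀ i : Fin (n - 1), ∀ (hi : (i : ℕ) < n) (hi1 : (i : ℕ) + 1 < n),
    (φ (PresentedGroup.of (Sum.inl i))) (FreeGroup.of ⟨(i : ℕ), hi⟩)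
        = FreeGroup.of ⟨(i : ℕ), hi⟩ * FreeGroup.of ⟨(i : ℕ) + 1, hi1⟩ *
          (FreeGroup.of ⟨(i : ℕ), hi⟩)⁻¹ ∧
    (φ (PresentedGroup.of (Sum.inl i))) (FreeGroup.of ⟨(i : ℕ) + 1, hi1⟩)
        = FreeGroup.of ⟨(i : ℕ), hi⟩ ∧
    (∀ l : Fin n, (l : ℕ) ≠ (i : ℕ) → (l : ℕ) ≠ (i : ℕ) + 1 →
      (φ (PresentedGroup.of (Sum.inl i))) (FreeGroup.of l) = FreeGroup.of l) ∧
    (φ (PresentedGroup.of (Sum.inr i))) (FreeGroup.of ⟨(i : ℕ), hi⟩)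
        = FreeGroup.of ⟨(i : ℕ) + 1, hi1⟩ ∧
    (φ (PresentedGroup.of (Sum.inr i))) (FreeGroup.of ⟨(i : ℕ) + 1, hi1⟩)
        = FreeGroup.of ⟨(i : ℕ), hi⟩ ∧
    (∀ l : Fin n, (l : ℕ) ≠ (i : ℕ) → (l : ℕ) ≠ (i : ℕ) + 1 →
      (φ (PresentedGroup.of (Sum.inr i))) (FreeGroup.of l) = FreeGroup.of l)


namespace VirtualBraid

open FreeGroup (of lift)
open Subgroup

section Automorphisms

variable {α : Type*}

@[ext]
theorem mulAut_ext {f g : MulAut (FreeGroup α)} (h : ∀ x, f (of x) = g (of x)) : f = g :=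
  MulEquiv.toMonoidHom_injective (FreeGroup.ext_hom _ _ h)

def liftAut (f g : α → FreeGroup α) (hgf : ∀ x, lift g (f x) = of x)
    (hfg : ∀ x, lift f (g x) = of x) : MulAut (FreeGroup α) :=
  MonoidHom.toMulEquiv (lift f) (lift g) (by ext; simp [hgf]) (by ext; simp [hfg])

@[simp]
theorem liftAut_apply_of (f g : α → FreeGroup α) (hgf hfg) (x : α) :
    liftAut f g hgf hfg (of x) = f x := by
  simp [liftAut]

@[simp]
theorem liftAut_symm_apply_of (f g : α → FreeGroup α) (hgf hfg) (x : α) :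
    (liftAut f g hgf hfg).symm (of x) = g x :=
  FreeGroup.lift_apply_of

def permAut : Equiv.Perm α →* MulAut (FreeGroup α) where
  toFun π := FreeGroup.freeGroupCongr π
  map_one' := by ext; simp
  map_mul' _ _ := by ext; simp

@[simp]
theorem permAut_apply_of (π : Equiv.Perm α) (x : α) : permAut π (of x) = of (π x) := by
  simp [permAut]

@[simp]
theorem permAut_symm_apply_of (π : Equiv.Perm α) (x : α) :
    (permAut π).symm (of x) = of (π.symm x) :=
  rfl

variable [DecidableEq α]

/-- The paper's `ε_{ab}`; the identity when `a = b`. -/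
def basisConj (a b : α) : MulAut (FreeGroup α) :=
  liftAut (fun x => if x = a then (of b)⁻¹ * of a * of b else of x)
    (fun x => if x = a then of b * of a * (of b)⁻¹ else of x)
    (fun x => by by_cases hx : x = a <;> by_cases hb : b = a <;> simp [hx, hb]; group)
    (fun x => by by_cases hx : x = a <;> by_cases hb : b = a <;> simp [hx, hb]; group)

/-- The paper's `σ̂_i` is `artinAut i (i + 1)`, and `α_i` is `permAut (Equiv.swap i (i + 1))`. -/
def artinAut (u v : α) : MulAut (FreeGroup α) :=
  liftAut (fun x => if x = u then of u * of v * (of u)⁻¹ else if x = v then of u else of x)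
    (fun x => if x = u then of v else if x = v then (of v)⁻¹ * of u * of v else of x)
    (fun x => by
      by_cases hx : x = u <;> by_cases hx' : x = v <;> by_cases h : v = u <;> simp [hx, hx', h]
      group)
    (fun x => by
      by_cases hx : x = u <;> by_cases hx' : x = v <;> by_cases h : v = u <;> simp [hx, hx', h]
      group)

@[simp]
theorem basisConj_apply_of (a b x : α) :
    basisConj a b (of x) = if x = a then (of b)⁻¹ * of a * of b else of x := by
  simp [basisConj]

@[simp]
theorem basisConj_symm_apply_of (a b x : α) :
    (basisConj a b).symm (of x) = if x = a then of b * of a * (of b)⁻¹ else of x :=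
  liftAut_symm_apply_of _ _ _ _ x

@[simp]
theorem artinAut_apply_of (u v x : α) :
    artinAut u v (of x) =
      if x = u then of u * of v * (of u)⁻¹ else if x = v then of u else of x := by
  simp [artinAut]

@[simp]
theorem artinAut_symm_apply_of (u v x : α) :
    (artinAut u v).symm (of x) =
      if x = u then of v else if x = v then (of v)⁻¹ * of u * of v else of x :=
  liftAut_symm_apply_of _ _ _ _ x

theorem swap_braid {u v w : α} (huv : u ≠ v) (hvw : v ≠ w) (huw : u ≠ w) :
    Equiv.swap u v * Equiv.swap v w * Equiv.swap u v =
      Equiv.swap v w * Equiv.swap u v * Equiv.swap v w := by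
  ext x
  simp only [Equiv.Perm.mul_apply, Equiv.swap_apply_def]
  split_ifs <;> simp_all

theorem swap_commute {u v w z : α} (huw : u ≠ w) (huz : u ≠ z) (hvw : v ≠ w) (hvz : v ≠ z) :
    Commute (Equiv.swap u v) (Equiv.swap w z) := by
  ext x
  simp only [Equiv.Perm.mul_apply, Equiv.swap_apply_def]
  split_ifs <;> simp_all

theorem basisConj_commute {a b c d : α} (hac : a ≠ c) (hbc : b ≠ c) (had : a ≠ d) :
    Commute (basisConj a b) (basisConj c d) := by
  ext x
  by_cases hxa : x = a <;> by_cases hxc : x = c <;> simp_all [Ne.symm]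

theorem permAut_conj_basisConj (π : Equiv.Perm α) (a b : α) :
    permAut π * basisConj a b * (permAut π)⁻¹ = basisConj (π a) (π b) := by
  ext x
  obtain ⟨y, rfl⟩ := π.surjective x
  by_cases hy : y = a <;> simp [hy]

theorem permAut_swap_conj_basisConj (u v a b : α) :
    permAut (Equiv.swap u v) * basisConj a b * permAut (Equiv.swap u v) =
      basisConj (Equiv.swap u v a) (Equiv.swap u v b) := by
  rw [← permAut_conj_basisConj, ← map_inv, Equiv.swap_inv]

theorem basisConj_conj_basisConj_of_target {i a b : α} (hia : i ≠ a) (hib : i ≠ b)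
    (hab : a ≠ b) :
    (basisConj a b)⁻¹ * basisConj i a * basisConj a b =
        basisConj i b * basisConj i a * (basisConj i b)⁻¹ ∧
      basisConj a b * basisConj i a * (basisConj a b)⁻¹ =
        (basisConj i b)⁻¹ * basisConj i a * basisConj i b := by
  constructor <;> ext x <;>
    by_cases hxi : x = i <;> by_cases hxa : x = a <;> by_cases hxb : x = b <;>
    simp_all [Ne.symm] <;> group

theorem basisConj_conj_basisConj_of_source {i a b : α} (hai : a ≠ i) (hbi : b ≠ i)
    (hab : a ≠ b) :
    (basisConj a b)⁻¹ * basisConj a i * basisConj a b =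
        basisConj i b * basisConj a i * (basisConj i b)⁻¹ ∧
      basisConj a b * basisConj a i * (basisConj a b)⁻¹ =
        (basisConj i b)⁻¹ * basisConj a i * basisConj i b := by
  constructor <;> ext x <;>
    by_cases hxi : x = i <;> by_cases hxa : x = a <;> by_cases hxb : x = b <;>
    simp_all [Ne.symm] <;> group

theorem basisConj_commute_mul {i a b : α} (hai : a ≠ i) (hbi : b ≠ i) (hab : a ≠ b) :
    Commute (basisConj a b) (basisConj a i * basisConj b i) := by
  ext x
  by_cases hxi : x = i <;> by_cases hxa : x = a <;> by_cases hxb : x = b <;>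
    simp_all [Ne.symm]
  group

theorem permAut_swap_mul_artinAut_inv (u v : α) :
    permAut (Equiv.swap u v) * (artinAut u v)⁻¹ = basisConj v u := by
  ext x
  by_cases hxu : x = u <;> by_cases hxv : x = v <;> simp_all [Equiv.swap_apply_of_ne_of_ne]

theorem artinAut_inv_mul_permAut_swap (u v : α) :
    (artinAut u v)⁻¹ * permAut (Equiv.swap u v) = basisConj u v := by
  ext x
  by_cases hxu : x = u <;> by_cases hxv : x = v <;> simp_all [Equiv.swap_apply_of_ne_of_ne]

theorem artinAut_braid {u v w : α} (huv : u ≠ v) (hvw : v ≠ w) (huw : u ≠ w) :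
    artinAut u v * artinAut v w * artinAut u v = artinAut v w * artinAut u v * artinAut v w := by
  ext x
  by_cases hxu : x = u <;> by_cases hxv : x = v <;> by_cases hxw : x = w <;>
    simp_all [Ne.symm]
  group

theorem artinAut_commute {u v w z : α} (huw : u ≠ w) (huz : u ≠ z) (hvw : v ≠ w) (hvz : v ≠ z) :
    Commute (artinAut u v) (artinAut w z) := by
  ext x
  by_cases hxu : x = u <;> by_cases hxv : x = v <;> by_cases hxw : x = w <;>
    by_cases hxz : x = z <;> simp_all [Ne.symm]

theorem artinAut_commute_permAut_swap {u v w z : α} (huw : u ≠ w) (huz : u ≠ z) (hvw : v ≠ w)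
    (hvz : v ≠ z) : Commute (artinAut u v) (permAut (Equiv.swap w z)) := by
  ext x
  by_cases hxu : x = u <;> by_cases hxv : x = v <;> by_cases hxw : x = w <;>
    by_cases hxz : x = z <;> simp_all [Ne.symm, Equiv.swap_apply_of_ne_of_ne]

theorem permAut_swap_mul_permAut_swap_mul_artinAut {u v w : α} (huv : u ≠ v) (hvw : v ≠ w)
    (huw : u ≠ w) :
    permAut (Equiv.swap u v) * permAut (Equiv.swap v w) * artinAut u v =
      artinAut v w * permAut (Equiv.swap u v) * permAut (Equiv.swap v w) := by
  ext x
  by_cases hxu : x = u <;> by_cases hxv : x = v <;> by_cases hxw : x = w <;>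
    simp_all [Ne.symm, Equiv.swap_apply_of_ne_of_ne]

theorem eq_artinAut_iff {u v : α} {f : MulAut (FreeGroup α)} :
    f = artinAut u v ↔ f (of u) = of u * of v * (of u)⁻¹ ∧ f (of v) = of u ∧
      ∀ l, l ≠ u → l ≠ v → f (of l) = of l := by
  constructor
  · rintro rfl
    simp_all
  · rintro ⟨hu, hv, hl⟩
    ext x
    by_cases hxu : x = u <;> by_cases hxv : x = v <;> simp_all

theorem eq_permAut_swap_iff {u v : α} {f : MulAut (FreeGroup α)} :
    f = permAut (Equiv.swap u v) ↔ f (of u) = of v ∧ f (of v) = of u ∧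
      ∀ l, l ≠ u → l ≠ v → f (of l) = of l := by
  constructor
  · rintro rfl
    simp_all [Equiv.swap_apply_of_ne_of_ne]
  · rintro ⟨hu, hv, hl⟩
    ext x
    by_cases hxu : x = u <;> by_cases hxv : x = v <;> simp_all [Equiv.swap_apply_of_ne_of_ne]

end Automorphisms

section Phi

variable {n : ℕ}

/-- The generators indexed by `i : Fin (n - 1)` cross the (0-based) strands `i` and `i + 1`. -/
def leftStrand (i : Fin (n - 1)) : Fin n := ⟨i, by omega⟩

def rightStrand (i : Fin (n - 1)) : Fin n := ⟨i + 1, by omega⟩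

@[simp] theorem val_leftStrand (i : Fin (n - 1)) : (leftStrand i : ℕ) = i := rfl

@[simp] theorem val_rightStrand (i : Fin (n - 1)) : (rightStrand i : ℕ) = i + 1 := rfl

theorem leftStrand_ne_rightStrand (i : Fin (n - 1)) : leftStrand i ≠ rightStrand i :=
  Fin.ne_of_val_ne (by simp)

def phiGen : VBGen n → MulAut (FreeGroup (Fin n))
  | .inl i => artinAut (leftStrand i) (rightStrand i)
  | .inr i => permAut (Equiv.swap (leftStrand i) (rightStrand i))

theorem lift_phiGen_of_mem_vbRels : ∀ r ∈ vbRels n, lift phiGen r = 1 := by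
  rintro r (⟨i, j, hij, rfl⟩ | ⟨i, j, hij, rfl⟩ | ⟨i, j, hij, rfl⟩ | ⟨i, j, hij, rfl⟩ | ⟨i, rfl⟩ |
    ⟨i, j, hij, rfl⟩ | ⟨i, j, hij, rfl⟩) <;>
    simp only [fS, fR, map_mul, map_inv, FreeGroup.lift_apply_of, phiGen, mul_inv_eq_one]
  · rw [show leftStrand j = rightStrand i from Fin.ext (by simp [hij])]
    refine artinAut_braid ?_ ?_ ?_ <;> simp [Fin.ext_iff] <;> omega
  · refine (artinAut_commute ?_ ?_ ?_ ?_).eq <;> simp [Fin.ext_iff] <;> omega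
  · rw [show leftStrand j = rightStrand i from Fin.ext (by simp [hij]), ← map_mul, ← map_mul,
      ← map_mul, ← map_mul]
    congr 1
    refine swap_braid ?_ ?_ ?_ <;> simp [Fin.ext_iff] <;> omega
  · rw [← map_mul, ← map_mul, (swap_commute ?_ ?_ ?_ ?_).eq] <;> simp [Fin.ext_iff] <;> omega
  · rw [← map_mul, Equiv.swap_mul_self, map_one]
  · rcases hij with hij | hij <;>
      refine (artinAut_commute_permAut_swap ?_ ?_ ?_ ?_).eq <;> simp [Fin.ext_iff] <;> omega
  · rw [show leftStrand j = rightStrand i from Fin.ext (by simp [hij])]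
    refine permAut_swap_mul_permAut_swap_mul_artinAut ?_ ?_ ?_ <;> simp [Fin.ext_iff] <;> omega

variable (n) in
def phi : VB n →* MulAut (FreeGroup (Fin n)) :=
  PresentedGroup.toGroup lift_phiGen_of_mem_vbRels

theorem phi_of_inl (i : Fin (n - 1)) :
    phi n (PresentedGroup.of (Sum.inl i)) = artinAut (leftStrand i) (rightStrand i) :=
  PresentedGroup.toGroup.of _

theorem phi_of_inr (i : Fin (n - 1)) :
    phi n (PresentedGroup.of (Sum.inr i)) = permAut (Equiv.swap (leftStrand i) (rightStrand i)) :=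
  PresentedGroup.toGroup.of _

theorem isPhiVW_iff {ψ : VB n →* MulAut (FreeGroup (Fin n))} :
    IsPhiVW ψ ↔ ∀ i : Fin (n - 1),
      ψ (PresentedGroup.of (Sum.inl i)) = artinAut (leftStrand i) (rightStrand i) ∧
      ψ (PresentedGroup.of (Sum.inr i)) = permAut (Equiv.swap (leftStrand i) (rightStrand i)) := by
  refine forall_congr' fun i => ?_
  rw [forall_prop_of_true (by omega), forall_prop_of_true (by omega), eq_artinAut_iff,
    eq_permAut_swap_iff]
  simp only [← Fin.val_ne_iff, val_leftStrand, val_rightStrand]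
  tauto

theorem isPhiVW_phi : IsPhiVW (phi n) :=
  isPhiVW_iff.2 fun i => ⟨phi_of_inl i, phi_of_inr i⟩

theorem eq_phi_of_isPhiVW {ψ : VB n →* MulAut (FreeGroup (Fin n))} (hψ : IsPhiVW ψ) :
    ψ = phi n := by
  refine PresentedGroup.ext fun x => ?_
  rcases x with i | i
  · rw [phi_of_inl, (isPhiVW_iff.1 hψ i).1]
  · rw [phi_of_inr, (isPhiVW_iff.1 hψ i).2]

end Phi

section Lambda

variable {n : ℕ}

theorem rho_mul_self (k : ℕ) : (rho k : VB n) * rho k = 1 := by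
  unfold rho
  split_ifs
  · exact PresentedGroup.one_of_mem (Or.inr (Or.inr (Or.inr (Or.inr (Or.inl ⟨_, rfl⟩)))))
  · exact mul_one 1

theorem rho_inv (k : ℕ) : (rho k : VB n)⁻¹ = rho k :=
  inv_eq_of_mul_eq_one_right (rho_mul_self k)

theorem asc_eq_inv_desc (a b : ℕ) : (asc a b : VB n) = (desc a b)⁻¹ := by
  rw [desc, ← List.map_reverse, List.prod_inv_reverse, List.map_map, List.map_reverse,
    List.reverse_reverse, asc]
  simp_rw [Function.comp_def, rho_inv]

theorem desc_of_lt {a b : ℕ} (h : b < a) : (desc a b : VB n) = 1 := by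
  simp [desc, Nat.sub_eq_zero_of_le h]

theorem desc_succ {a b : ℕ} (h : a ≤ b + 1) :
    (desc a (b + 1) : VB n) = rho (b + 1) * desc a b := by
  rw [desc, desc, show b + 1 + 1 - a = b + 1 - a + 1 by omega, List.range'_concat]
  simp [show a + (b + 1 - a) = b + 1 by omega]

theorem lam_add_one_add_two_self (k : ℕ) :
    (lam (k + 1) (k + 2) : VB n) = rho (k + 1) * (sig (k + 1))⁻¹ := by
  simp [lam, asc_eq_inv_desc, desc_of_lt]

theorem lam_add_two_add_one_self (k : ℕ) :
    (lam (k + 2) (k + 1) : VB n) = (sig (k + 1))⁻¹ * rho (k + 1) := by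
  simp [lam, asc_eq_inv_desc, desc_of_lt]

theorem lam_add_one_add_two_of_lt {k l : ℕ} (hkl : k < l) :
    (lam (k + 1) (l + 2) : VB n) = rho (l + 1) * lam (k + 1) (l + 1) * rho (l + 1) := by
  rw [lam, if_pos (by omega), lam, if_pos (by omega), Nat.add_sub_cancel,
    show l + 2 - 1 = l + 1 by omega, asc_eq_inv_desc, asc_eq_inv_desc, desc_succ (by omega),
    mul_inv_rev, rho_inv]
  group

theorem lam_add_two_add_one_of_lt {k l : ℕ} (hlk : l < k) :
    (lam (k + 2) (l + 1) : VB n) = rho (k + 1) * lam (k + 1) (l + 1) * rho (k + 1) := by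
  rw [lam, if_neg (by omega), lam, if_neg (by omega), Nat.add_sub_cancel,
    show k + 2 - 1 = k + 1 by omega, asc_eq_inv_desc, asc_eq_inv_desc, desc_succ (by omega),
    mul_inv_rev, rho_inv]
  group

theorem phi_sig_add_one {k : ℕ} (hk : k + 1 < n) :
    phi n (sig (k + 1)) = artinAut ⟨k, by omega⟩ ⟨k + 1, hk⟩ := by
  rw [sig, dif_pos (by omega), phi_of_inl]
  rfl

theorem phi_rho_add_one {k : ℕ} (hk : k + 1 < n) :
    phi n (rho (k + 1)) = permAut (Equiv.swap ⟨k, by omega⟩ ⟨k + 1, hk⟩) := by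
  rw [rho, dif_pos (by omega), phi_of_inr]
  rfl

theorem phi_lam_of_lt {k l : ℕ} (hkl : k < l) (hl : l < n) :
    phi n (lam (k + 1) (l + 1)) = basisConj ⟨l, hl⟩ ⟨k, by omega⟩ := by
  induction l, hkl using Nat.le_induction with
  | base =>
    rw [lam_add_one_add_two_self, map_mul, map_inv, phi_sig_add_one hl, phi_rho_add_one hl,
      permAut_swap_mul_artinAut_inv]
  | succ l hkl ih =>
    rw [lam_add_one_add_two_of_lt hkl, map_mul, map_mul, phi_rho_add_one hl, ih (by omega),
      permAut_swap_conj_basisConj, Equiv.swap_apply_left, Equiv.swap_apply_of_ne_of_ne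
        (Fin.ne_of_val_ne (by simp; omega)) (Fin.ne_of_val_ne (by simp; omega))]

theorem phi_lam_of_gt {k l : ℕ} (hlk : l < k) (hk : k < n) :
    phi n (lam (k + 1) (l + 1)) = basisConj ⟨l, by omega⟩ ⟨k, hk⟩ := by
  induction k, hlk using Nat.le_induction with
  | base =>
    rw [lam_add_two_add_one_self, map_mul, map_inv, phi_sig_add_one hk, phi_rho_add_one hk,
      artinAut_inv_mul_permAut_swap]
  | succ k hlk ih =>
    rw [lam_add_two_add_one_of_lt hlk, map_mul, map_mul, phi_rho_add_one hk, ih (by omega),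
      permAut_swap_conj_basisConj, Equiv.swap_apply_left, Equiv.swap_apply_of_ne_of_ne
        (Fin.ne_of_val_ne (by simp; omega)) (Fin.ne_of_val_ne (by simp; omega))]

theorem phi_lam {k l : ℕ} (hk : k < n) (hl : l < n) (hkl : k ≠ l) :
    phi n (lam (k + 1) (l + 1)) = basisConj ⟨l, hl⟩ ⟨k, hk⟩ := by
  rcases lt_or_gt_of_ne hkl with h | h
  · exact phi_lam_of_lt h hl
  · exact phi_lam_of_gt h hk

theorem map_lam_eq_one {G : Type*} [Group G] (f : VB n →* G) (hf : ∀ k, f (sig k) = f (rho k))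
    (k l : ℕ) : f (lam k l) = 1 := by
  unfold lam
  split_ifs <;> simp [asc_eq_inv_desc, hf]

theorem nu_sig_eq_nu_rho {ν : VB n →* Equiv.Perm (Fin n)} (hν : IsNu ν) (k : ℕ) :
    ν (sig k) = ν (rho k) := by
  unfold sig rho
  split_ifs
  · exact (hν _).1.trans (hν _).2.symm
  · rfl

end Lambda

section Normalizer

variable {G : Type*} [Group G]

theorem mem_normalizer_closure_of_conj_mem {s : G} {T : Set G}
    (h : ∀ t ∈ T, s * t * s⁻¹ ∈ closure T) (h' : ∀ t ∈ T, s⁻¹ * t * s ∈ closure T) :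
    s ∈ normalizer (closure T : Set G) := by
  have conj_le : ∀ g : G, (∀ t ∈ T, g * t * g⁻¹ ∈ closure T) →
      (closure T).map (MulAut.conj g).toMonoidHom ≤ closure T := by
    intro g hg
    rw [MonoidHom.map_closure, closure_le]
    rintro _ ⟨t, ht, rfl⟩
    exact hg t ht
  refine mem_normalizer_iff.2 fun x => ⟨fun hx => conj_le s h ⟨x, hx, rfl⟩, fun hx => ?_⟩
  simpa [mul_assoc] using conj_le s⁻¹ (by simpa using h') ⟨_, hx, rfl⟩

theorem map_ker_le_of_mul_inv_mem {H K : Type*} [Group H] [Group K] {f : G →* H} {ν : G →* K}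
    {π : K →* H} {N : Subgroup H} (hN : π.range ≤ normalizer (N : Set H)) {S : Set G}
    (hS : closure S = ⊤) (hf : ∀ s ∈ S, f s * (π (ν s))⁻¹ ∈ N) : ν.ker.map f ≤ N := by
  have key : ∀ g, f g * (π (ν g))⁻¹ ∈ N := by
    intro g
    induction (hS ▸ mem_top g : g ∈ closure S) using closure_induction with
    | mem s hs => exact hf s hs
    | one => simp
    | mul x y _ _ hx hy =>
      have hconj := (mem_normalizer_iff.1 (hN ⟨ν x, rfl⟩) _).1 hy
      simpa [mul_assoc] using mul_mem hx hconj
    | inv x _ hx =>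
      have hconj := (mem_normalizer_iff''.1 (hN ⟨ν x, rfl⟩) _).1 (inv_mem hx)
      simpa [mul_assoc] using hconj
  rintro _ ⟨g, hg, rfl⟩
  simpa [(MonoidHom.mem_ker).1 hg] using key g

end Normalizer

section BasisConjugating

variable {n : ℕ}

theorem isEps_iff {e : MulAut (FreeGroup (Fin n))} {a b : Fin n} :
    IsEps e a b ↔ e = basisConj a b := by
  constructor
  · rintro ⟨ha, hl⟩
    ext x
    by_cases hx : x = a
    · subst hx; simp [ha]
    · simp [hx, hl x hx]
  · rintro rfl
    exact ⟨by simp, fun l hl => by simp [hl]⟩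

theorem cbSub_eq_closure :
    CbSub n = closure {e | ∃ a b : Fin n, a ≠ b ∧ e = basisConj a b} := by
  simp only [CbSub, isEps_iff]

theorem permAut_mem_normalizer_cbSub (π : Equiv.Perm (Fin n)) :
    permAut π ∈ normalizer (CbSub n : Set (MulAut (FreeGroup (Fin n)))) := by
  have conj_mem : ∀ σ : Equiv.Perm (Fin n),
      ∀ t ∈ {e | ∃ a b : Fin n, a ≠ b ∧ e = basisConj a b},
        permAut σ * t * (permAut σ)⁻¹ ∈ CbSub n := by
    rintro σ _ ⟨a, b, hab, rfl⟩
    rw [permAut_conj_basisConj, cbSub_eq_closure]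
    exact subset_closure ⟨σ a, σ b, σ.injective.ne hab, rfl⟩
  rw [cbSub_eq_closure] at conj_mem ⊢
  refine mem_normalizer_closure_of_conj_mem (conj_mem π) fun t ht => ?_
  simpa [← map_inv] using conj_mem π⁻¹ t ht

theorem phi_mul_inv_mem_cbSub {ν : VB n →* Equiv.Perm (Fin n)} (hν : IsNu ν) (x : VBGen n) :
    phi n (PresentedGroup.of x) * (permAut (ν (PresentedGroup.of x)))⁻¹ ∈ CbSub n := by
  rcases x with i | i
  · rw [phi_of_inl, show ν _ = Equiv.swap (leftStrand i) (rightStrand i) from (hν i).1,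
      ← inv_inv (artinAut _ _), ← mul_inv_rev, permAut_swap_mul_artinAut_inv, cbSub_eq_closure]
    exact inv_mem (subset_closure ⟨_, _, (leftStrand_ne_rightStrand i).symm, rfl⟩)
  · rw [phi_of_inr, show ν _ = Equiv.swap (leftStrand i) (rightStrand i) from (hν i).2,
      mul_inv_cancel]
    exact one_mem _

theorem map_phi_ker_eq_cbSub {ν : VB n →* Equiv.Perm (Fin n)} (hν : IsNu ν) :
    ν.ker.map (phi n) = CbSub n := by
  refine le_antisymm
    (map_ker_le_of_mul_inv_mem (π := permAut) ?_ (PresentedGroup.closure_range_of _) ?_) ?_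
  · rintro _ ⟨π, rfl⟩
    exact permAut_mem_normalizer_cbSub π
  · rintro _ ⟨x, rfl⟩
    exact phi_mul_inv_mem_cbSub hν x
  · rw [cbSub_eq_closure, closure_le]
    rintro _ ⟨a, b, hab, rfl⟩
    exact ⟨lam (b + 1) (a + 1), map_lam_eq_one ν (nu_sig_eq_nu_rho hν) _ _,
      phi_lam b.isLt a.isLt (Fin.val_ne_iff.2 hab.symm)⟩

end BasisConjugating

section StarGens

variable {α : Type*} [DecidableEq α]

/-- The generators `ε m c`, `ε c m` (`c ∈ C`) of the paper's `D_i`, for `m` the strand `i + 1`. -/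
def starGens (m : α) (C : Set α) : Set (MulAut (FreeGroup α)) :=
  {e | ∃ c ∈ C, e = basisConj m c ∨ e = basisConj c m}

variable {m : α} {C : Set α}

theorem basisConj_mem_closure_starGens {c : α} (hc : c ∈ C) :
    basisConj m c ∈ closure (starGens m C) ∧ basisConj c m ∈ closure (starGens m C) :=
  ⟨subset_closure ⟨c, hc, .inl rfl⟩, subset_closure ⟨c, hc, .inr rfl⟩⟩

theorem conj_mem_closure_starGens (hm : m ∉ C) {a b : α} (ha : a ∈ C) (hb : b ∈ C) (hab : a ≠ b)
    {t : MulAut (FreeGroup α)} (ht : t ∈ starGens m C) :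
    basisConj a b * t * (basisConj a b)⁻¹ ∈ closure (starGens m C) ∧
      (basisConj a b)⁻¹ * t * basisConj a b ∈ closure (starGens m C) := by
  have ham : a ≠ m := ne_of_mem_of_not_mem ha hm
  have hbm : b ≠ m := ne_of_mem_of_not_mem hb hm
  obtain ⟨hma, ham'⟩ := basisConj_mem_closure_starGens (m := m) ha
  obtain ⟨hmb, hbm'⟩ := basisConj_mem_closure_starGens (m := m) hb
  have conj_am : basisConj a b * basisConj a m * (basisConj a b)⁻¹ ∈ closure (starGens m C) ∧
      (basisConj a b)⁻¹ * basisConj a m * basisConj a b ∈ closure (starGens m C) := by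
    rw [(basisConj_conj_basisConj_of_source ham hbm hab).1,
      (basisConj_conj_basisConj_of_source ham hbm hab).2]
    exact ⟨mul_mem (mul_mem (inv_mem hmb) ham') hmb, mul_mem (mul_mem hmb ham') (inv_mem hmb)⟩
  obtain ⟨c, hc, rfl | rfl⟩ := ht
  · by_cases hca : c = a
    · subst hca
      rw [(basisConj_conj_basisConj_of_target ham.symm hbm.symm hab).1,
        (basisConj_conj_basisConj_of_target ham.symm hbm.symm hab).2]
      exact ⟨mul_mem (mul_mem (inv_mem hmb) hma) hmb, mul_mem (mul_mem hmb hma) (inv_mem hmb)⟩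
    · have hcomm := basisConj_commute ham hbm (Ne.symm hca)
      rw [hcomm.mul_inv_cancel, hcomm.inv_mul_cancel]
      exact ⟨subset_closure ⟨c, hc, .inl rfl⟩, subset_closure ⟨c, hc, .inl rfl⟩⟩
  · by_cases hca : c = a
    · subst hca
      exact conj_am
    by_cases hcb : c = b
    · subst hcb
      -- `ε a c` commutes with `ε a m * ε c m`, so conjugating `ε c m` reduces to `ε a m`
      have conj_eq : ∀ g, Commute g (basisConj a m * basisConj c m) →
          g * basisConj c m * g⁻¹ =
            (g * basisConj a m * g⁻¹)⁻¹ * (basisConj a m * basisConj c m) :=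
        fun g hg => by rw [← hg.mul_inv_cancel]; group
      have hcomm := basisConj_commute_mul ham hbm hab
      have conj_inv := conj_eq _ hcomm.inv_left
      rw [inv_inv] at conj_inv
      rw [conj_eq _ hcomm, conj_inv]
      exact ⟨mul_mem (inv_mem conj_am.1) (mul_mem ham' hbm'),
        mul_mem (inv_mem conj_am.2) (mul_mem ham' hbm')⟩
    · have hcomm := basisConj_commute (Ne.symm hca) (Ne.symm hcb) ham
      rw [hcomm.mul_inv_cancel, hcomm.inv_mul_cancel]
      exact ⟨subset_closure ⟨c, hc, .inr rfl⟩, subset_closure ⟨c, hc, .inr rfl⟩⟩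

theorem basisConj_mem_normalizer_closure_starGens (hm : m ∉ C) {a b : α} (ha : a ∈ insert m C)
    (hb : b ∈ insert m C) (hab : a ≠ b) :
    basisConj a b ∈ normalizer (closure (starGens m C) : Set (MulAut (FreeGroup α))) := by
  rcases ha with rfl | ha
  · exact le_normalizer (basisConj_mem_closure_starGens (hb.resolve_left hab.symm)).1
  rcases hb with rfl | hb
  · exact le_normalizer (basisConj_mem_closure_starGens ha).2
  exact mem_normalizer_closure_of_conj_mem
    (fun t ht => (conj_mem_closure_starGens hm ha hb hab ht).1)
    (fun t ht => (conj_mem_closure_starGens hm ha hb hab ht).2)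

end StarGens

section VirtualPure

variable {n : ℕ}

theorem dsub_eq_closure_starGens {i : ℕ} (hi : i < n) :
    Dsub n i = closure (starGens ⟨i, hi⟩ (Set.Iio ⟨i, hi⟩)) := by
  simp only [Dsub, isEps_iff]
  congr 1
  ext e
  constructor
  · rintro ⟨k, hk, hki, _, hk', h⟩
    exact ⟨⟨k - 1, hk'⟩, Fin.lt_def.2 (by simp; omega), h⟩
  · rintro ⟨c, hc, h⟩
    exact ⟨c + 1, by omega, Fin.lt_def.1 hc, hi, by omega, by simpa using h⟩

theorem map_phi_vpSub_le_normalizer {i : ℕ} (hi : i < n) :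
    (VPsub n (i + 1)).map (phi n) ≤ normalizer (Dsub n i : Set (MulAut (FreeGroup (Fin n)))) := by
  rw [VPsub, MonoidHom.map_closure, closure_le, dsub_eq_closure_starGens hi]
  rintro _ ⟨_, ⟨k, l, hk, hki, hl, hli, hkl, rfl⟩, rfl⟩
  obtain ⟨k, rfl⟩ : ∃ k', k = k' + 1 := ⟨k - 1, by omega⟩
  obtain ⟨l, rfl⟩ : ∃ l', l = l' + 1 := ⟨l - 1, by omega⟩
  rw [phi_lam (k := k) (l := l) (by omega) (by omega) (by omega), SetLike.mem_coe]
  refine basisConj_mem_normalizer_closure_starGens Set.self_notMem_Iio ?_ ?_ ?_ <;>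
    simp [Fin.ext_iff] <;> omega

theorem map_phi_vstar_eq_dsub {i : ℕ} (hi : i < n) : (Vstar n i).map (phi n) = Dsub n i := by
  apply le_antisymm
  · rw [Vstar, MonoidHom.map_closure, closure_le]
    rintro _ ⟨_, ⟨g, hg, k, hk, hki, rfl | rfl⟩, rfl⟩ <;>
      obtain ⟨k, rfl⟩ : ∃ k', k = k' + 1 := ⟨k - 1, by omega⟩ <;>
      rw [SetLike.mem_coe, map_mul, map_mul, map_inv,
        ← mem_normalizer_iff''.1 (map_phi_vpSub_le_normalizer hi ⟨g, hg, rfl⟩),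
        dsub_eq_closure_starGens hi]
    · rw [phi_lam (k := k) (l := i) (by omega) hi (by omega)]
      refine (basisConj_mem_closure_starGens ?_).1
      simpa [Fin.lt_def] using hki
    · rw [phi_lam (k := i) (l := k) hi (by omega) (by omega)]
      refine (basisConj_mem_closure_starGens ?_).2
      simpa [Fin.lt_def] using hki
  · rw [dsub_eq_closure_starGens hi, closure_le]
    rintro _ ⟨c, hc, rfl | rfl⟩
    · refine ⟨lam (c + 1) (i + 1), subset_closure ⟨1, one_mem _, c + 1, by omega, hc, .inl ?_⟩, ?_⟩
      · group
      · exact phi_lam _ _ (Fin.val_ne_iff.2 (ne_of_lt hc))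
    · refine ⟨lam (i + 1) (c + 1), subset_closure ⟨1, one_mem _, c + 1, by omega, hc, .inr ?_⟩, ?_⟩
      · group
      · exact phi_lam _ _ (Fin.val_ne_iff.2 (ne_of_gt hc))

end VirtualPure

end VirtualBraid

theorem stmt_17_general (n : ℕ)
    (ν : VB n →* Equiv.Perm (Fin n)) (hν : IsNu ν) :
    ∃ φ : VB n →* MulAut (FreeGroup (Fin n)),
      IsPhiVW φ ∧
      (∀ ψ : VB n →* MulAut (FreeGroup (Fin n)), IsPhiVW ψ → ψ = φ) ∧
      Subgroup.map φ ν.ker = CbSub n ∧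
      (∀ i : ℕ, 1 ≤ i → i ≤ n - 1 → Subgroup.map φ (Vstar n i) = Dsub n i) :=
  ⟨VirtualBraid.phi n, VirtualBraid.isPhiVW_phi, fun _ => VirtualBraid.eq_phi_of_isPhiVW,
    VirtualBraid.map_phi_ker_eq_cbSub hν,
    fun _ _ hi => VirtualBraid.map_phi_vstar_eq_dsub (by omega)⟩

/-- there is a unique homomorphism φ : VB_n → Aut(F_n) with
φ(σ_i) = σ̂_i and φ(ρ_i) = α_i; it maps VP_n onto Cb_n = ⟨ε_{ij}⟩ and each
V_i^* onto D_i. -/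
theorem stmt_17 (n : ℕ) (hn : 2 ≤ n)
    (ν : VB n →* Equiv.Perm (Fin n)) (hν : IsNu ν) :
    ∃ φ : VB n →* MulAut (FreeGroup (Fin n)),
      IsPhiVW φ ∧
      (∀ ψ : VB n →* MulAut (FreeGroup (Fin n)), IsPhiVW ψ → ψ = φ) ∧
      Subgroup.map φ ν.ker = CbSub n ∧
      (∀ i : ℕ, 1 ≤ i → i ≤ n - 1 → Subgroup.map φ (Vstar n i) = Dsub n i) :=
  stmt_17_general n ν hν
end
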